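/- Let $\Phi : [0,\infty) \to [0,\infty)$ be a strictly increasing continuous bijection with $\Phi(0) = 0$. Let $E : \mathbb{N} \to [0,\infty)$ satisfy $E(n+1) + \Phi^{-1}(E(n+1)) \leq E(n)$ for all $n \geq 0$. Let $S : [0,\infty) \to [0,\infty)$ be the solution of $S'(t) = -(I+\Phi)^{-1}(S(t))$ with $S(0) = E(0)$, where $(I+\Phi)^{-1}(y)$ denotes the unique $z \geq 0$ with $z + \Phi(z) = y$. Then $E(n) \leq S(n)$ for all $n \in \mathbb{N}$. -/

import Mathlib

/-!
With `G = (I + Φ)⁻¹` one has `(I + Ψ)⁻¹ = I - G`: the point `z = y - G y` equals `Φ (G y)`, so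
`Ψ z = G y` and `z + Ψ z = y`. As `I + Ψ` is increasing, `E (n+1) + Ψ (E (n+1)) ≤ E n ≤ S n`
gives `E (n+1) ≤ S n - G (S n)`. On the other hand `S` decreases, so `G ∘ S ≤ G (S n)` on
`[n, ∞)`, and the mean value inequality gives `S n - G (S n) ≤ S (n+1)`: one explicit Euler
step of unit length underestimates the solution.
-/

open Set Function

theorem le_sub_resolvent_of_add_inv_le {Φ Ψ G : ℝ → ℝ} (hΦ : StrictMonoOn Φ (Ici 0))
    (hΦ₀ : MapsTo Φ (Ici 0) (Ici 0)) (hΨ₀ : MapsTo Ψ (Ici 0) (Ici 0))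
    (hΦΨ : LeftInvOn Φ Ψ (Ici 0)) (hG₀ : MapsTo G (Ici 0) (Ici 0))
    (hG : ∀ y ∈ Ici 0, G y + Φ (G y) = y) {x y : ℝ} (hx : 0 ≤ x) (hy : 0 ≤ y)
    (h : x + Ψ x ≤ y) : x ≤ y - G y := by
  have hw : G y ∈ Ici 0 := hG₀ hy
  have hyw : y - G y = Φ (G y) := by linarith [hG y hy]
  have hΨΦ : Ψ (Φ (G y)) = G y := hΦ.injOn.rightInvOn_of_leftInvOn hΦΨ hΦ₀ hΨ₀ hw
  have hIΨ : StrictMonoOn (fun x => x + Ψ x) (Ici 0) :=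
    strictMonoOn_id.add_monotone (monotoneOn_of_rightInvOn_of_mapsTo hΦ.monotoneOn hΦΨ hΨ₀)
  rw [hyw]
  refine (hIΨ.le_iff_le hx (hΦ₀ hw)).1 ?_
  calc x + Ψ x ≤ y := h
    _ = Φ (G y) + Ψ (Φ (G y)) := by rw [hΨΦ]; linarith [hG y hy]

theorem sub_le_add_one_of_hasDerivAt {G S : ℝ → ℝ} (hG : MonotoneOn G (Ici 0))
    (hG₀ : MapsTo G (Ici 0) (Ici 0)) (hS₀ : ∀ t, 0 ≤ t → 0 ≤ S t)
    (hS : ∀ t, 0 ≤ t → HasDerivAt S (-(G (S t))) t) {a : ℝ} (ha : 0 ≤ a) :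
    S a - G (S a) ≤ S (a + 1) := by
  have hanti : AntitoneOn S (Ici 0) :=
    antitoneOn_of_hasDerivWithinAt_nonpos (convex_Ici 0)
      (fun t ht => (hS t ht).continuousAt.continuousWithinAt)
      (fun t ht => (hS t (interior_subset ht)).hasDerivWithinAt)
      (fun t ht => neg_nonpos.2 (hG₀ (hS₀ t (interior_subset ht))))
  have hderiv : ∀ t ∈ interior (Ici a), -G (S a) ≤ deriv S t := by
    intro t ht
    rw [interior_Ici] at ht
    have ht₀ : 0 ≤ t := ha.trans ht.le
    rw [(hS t ht₀).deriv, neg_le_neg_iff]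
    exact hG (hS₀ t ht₀) (hS₀ a ha) (hanti ha ht₀ ht.le)
  have := (convex_Ici a).mul_sub_le_image_sub_of_le_deriv
    (fun t ht => (hS t (ha.trans ht)).continuousAt.continuousWithinAt)
    (fun t ht => (hS t (ha.trans (interior_subset ht))).differentiableAt.differentiableWithinAt)
    hderiv a self_mem_Ici (a + 1) (by simp) (by linarith)
  linarith

theorem stmt_8_general (Φ Ψ G : ℝ → ℝ)
    (hmono : StrictMonoOn Φ (Set.Ici 0))
    (hbij : Set.BijOn Φ (Set.Ici 0) (Set.Ici 0))
    (hΨ : ∀ y, 0 ≤ y → 0 ≤ Ψ y ∧ Φ (Ψ y) = y)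
    (hG : ∀ y, 0 ≤ y → 0 ≤ G y ∧ G y + Φ (G y) = y)
    (E : ℕ → ℝ) (hEnonneg : ∀ n, 0 ≤ E n)
    (hE : ∀ n, E (n + 1) + Ψ (E (n + 1)) ≤ E n)
    (S : ℝ → ℝ)
    (hSnonneg : ∀ t, 0 ≤ t → 0 ≤ S t)
    (hS : ∀ t, 0 ≤ t → HasDerivAt S (-(G (S t))) t)
    (hS0 : S 0 = E 0) :
    ∀ n : ℕ, E n ≤ S n := by
  have hG₀ : MapsTo G (Ici 0) (Ici 0) := fun y hy => (hG y hy).1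
  have hGmono : MonotoneOn G (Ici 0) :=
    monotoneOn_of_rightInvOn_of_mapsTo (strictMonoOn_id.add hmono).monotoneOn
      (fun y hy => (hG y hy).2) hG₀
  intro n
  induction n with
  | zero => simpa using hS0.ge
  | succ n ih =>
    calc E (n + 1) ≤ S n - G (S n) :=
          le_sub_resolvent_of_add_inv_le hmono hbij.mapsTo (fun y hy => (hΨ y hy).1) (fun y hy => (hΨ y hy).2)
            hG₀ (fun y hy => (hG y hy).2) (hEnonneg _) (hSnonneg n n.cast_nonneg)
            ((hE n).trans ih)
      _ ≤ S (n + 1 : ℕ) := by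
          push_cast
          exact sub_le_add_one_of_hasDerivAt hGmono hG₀ hSnonneg hS n.cast_nonneg

/-- Lasiecka–Tataru comparison lemma: a discrete energy sequence satisfying
`(I + Φ⁻¹) E(n+1) ≤ E(n)` is dominated by the solution of the ODE
`S' = -(I + Φ)⁻¹ ∘ S`, `S(0) = E(0)`. Here `Ψ = Φ⁻¹` and `G = (I + Φ)⁻¹`
are given via their defining properties. -/
theorem stmt_8 (Φ Ψ G : ℝ → ℝ)
    (hmono : StrictMonoOn Φ (Set.Ici 0))
    (hcont : ContinuousOn Φ (Set.Ici 0))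
    (hbij : Set.BijOn Φ (Set.Ici 0) (Set.Ici 0))
    (h0 : Φ 0 = 0)
    (hΨ : ∀ y, 0 ≤ y → 0 ≤ Ψ y ∧ Φ (Ψ y) = y)
    (hG : ∀ y, 0 ≤ y → 0 ≤ G y ∧ G y + Φ (G y) = y)
    (E : ℕ → ℝ) (hEnonneg : ∀ n, 0 ≤ E n)
    (hE : ∀ n, E (n + 1) + Ψ (E (n + 1)) ≤ E n)
    (S : ℝ → ℝ)
    (hSnonneg : ∀ t, 0 ≤ t → 0 ≤ S t)
    (hS : ∀ t, 0 ≤ t → HasDerivAt S (-(G (S t))) t)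
    (hS0 : S 0 = E 0) :
    ∀ n : ℕ, E n ≤ S n :=
  stmt_8_general Φ Ψ G hmono hbij hΨ hG E hEnonneg hE S hSnonneg hS hS0
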